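/- Suppose Φ(A, B) is a property of pairs of subsets of a Polish space X which is hereditary (Φ(A,B) and A' ⊆ A, B' ⊆ B imply Φ(A',B')), continuous upward in the second variable (Φ(A, B_n) for an increasing sequence B_n with union B implies Φ(A,B)), and Π^1_1 on Σ^1_1. If D_0 ⊆ X is Σ^1_1 and Φ(D_0, X \ D_0) holds, then there is a Borel (Δ^1_1) set D ⊇ D_0 with Φ(D, X \ D). -/

import Mathlib

/-!
First reflection (Kechris 35.10): if `Ψ` is `Π¹₁` on `Σ¹₁` and `Ψ A` holds for an analytic
`A = range f`, `f : (ℕ → ℕ) → X` continuous, then `Ψ B` for some Borel `B ⊇ A`. The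
Luzin–Sierpiński tree `T x = {s | x ∈ closure (f '' cyl s)}` is ill-founded iff `x ∈ A`. The
relation "some embedding of `T y` into `T x` sends the root to a child of the root" is analytic, and when
`T y` is well-founded so is its negation "`T x` embeds into `T y`": on well-founded trees they say
`rank T y < rank T x` and `rank T x ≤ rank T y`. Hence `K y = A ∪ {x | T x lies strictly above T y}`
is Borel for `y ∉ A` and equals `A` for `y ∈ A`, while `{y | ¬ Ψ (K y)}` is analytic. Either some
`K y` with `y ∉ A` satisfies `Ψ`, or that analytic set is exactly `Aᶜ`, and `A` is Borel by
Suslin's theorem.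

Second reflection: first reflection for `Ψ = Φ · Eᶜ` yields Borel sets `X = E₀ ⊇ E₁ ⊇ ⋯ ⊇ D₀` with
`Φ Eₙ₊₁ Eₙᶜ`; heredity gives `Φ D Eₙᶜ` for `D = ⋂ Eₙ`, and upward continuity gives `Φ D Dᶜ`.
-/

open MeasureTheory Set

universe u

section WellFoundedRank

variable {α β : Type u} {r : α → α → Prop} {s : β → β → Prop}
  [IsWellFounded α r] [IsWellFounded β s]

theorem IsWellFounded.rank_le_rank_of_map {f : α → β} (hf : ∀ a b, r a b → s (f a) (f b))
    (a : α) : IsWellFounded.rank r a ≤ IsWellFounded.rank s (f a) := by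
  induction a using IsWellFounded.induction r with
  | _ a ih =>
    rw [IsWellFounded.rank_eq]
    exact Ordinal.iSup_le fun b => Order.succ_le_of_lt <|
      (ih b.1 b.2).trans_lt (IsWellFounded.rank_lt_of_rel (hf _ _ b.2))

theorem IsWellFounded.exists_rel_le_rank {a : α} {o : Ordinal} (h : o < IsWellFounded.rank r a) :
    ∃ b, r b a ∧ o ≤ IsWellFounded.rank r b := by
  rw [IsWellFounded.rank_eq, Ordinal.lt_iSup_iff] at h
  obtain ⟨⟨b, hb⟩, hlt⟩ := h
  exact ⟨b, hb, Order.lt_succ_iff.1 hlt⟩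

end WellFoundedRank

theorem eq_of_forall_mem_closure_image_cylinder {E : ℕ → Type*} [∀ n, TopologicalSpace (E n)]
    [∀ n, DiscreteTopology (E n)] {X : Type*} [TopologicalSpace X] [T2Space X]
    {f : (∀ n, E n) → X} (hf : Continuous f) {w : ∀ n, E n} {x : X}
    (h : ∀ k, x ∈ closure (f '' PiNat.cylinder w k)) : f w = x := by
  by_contra hne
  obtain ⟨U, V, hU, hV, hxU, hwV, hUV⟩ := t2_separation (Ne.symm hne)
  obtain ⟨_, ⟨y, k, rfl⟩, hwy, hsub⟩ :=
    (PiNat.isTopologicalBasis_cylinders _).exists_subset_of_mem_open hwV (hV.preimage hf)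
  rw [← PiNat.mem_cylinder_iff_eq.1 hwy] at hsub
  obtain ⟨_, hxU', ⟨v, hv, rfl⟩⟩ := mem_closure_iff.1 (h k) U hU hxU
  exact Set.disjoint_left.1 hUV hxU' (hsub hv)

namespace NatTree

/-- Finite sequences are stored reversed, so that extending a node is `List.cons`:
`revInit v k = [v (k-1), …, v 0]`. -/
def revInit (v : ℕ → ℕ) : ℕ → List ℕ
  | 0 => []
  | k + 1 => v k :: revInit v k

@[simp] theorem length_revInit (v : ℕ → ℕ) (k : ℕ) : (revInit v k).length = k := by
  induction k with
  | zero => rfl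
  | succ k ih => simp [revInit, ih]

theorem revInit_eq_revInit_iff {v w : ℕ → ℕ} {k : ℕ} :
    revInit v k = revInit w k ↔ ∀ i < k, v i = w i := by
  induction k with
  | zero => simp [revInit]
  | succ k ih =>
    simp only [revInit, List.cons.injEq, ih]
    rw [Nat.forall_lt_succ_right, and_comm]

def cyl (s : List ℕ) : Set (ℕ → ℕ) := {v | revInit v s.length = s}

theorem cyl_revInit (w : ℕ → ℕ) (k : ℕ) : cyl (revInit w k) = PiNat.cylinder w k := by
  ext v
  simp [cyl, revInit_eq_revInit_iff]

theorem cyl_cons_subset (n : ℕ) (s : List ℕ) : cyl (n :: s) ⊆ cyl s :=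
  fun _ hv => (List.cons.inj hv).2

def IsTree (T : Set (List ℕ)) : Prop := ∀ ⦃n s⦄, n :: s ∈ T → s ∈ T

def Child (T : Set (List ℕ)) (a b : List ℕ) : Prop := a ∈ T ∧ ∃ n, a = n :: b

variable {S T U : Set (List ℕ)}

theorem IsTree.acc_child (hT : IsTree T) (h : Acc (Child T) []) (a : List ℕ) :
    Acc (Child T) a := by
  induction a with
  | nil => exact h
  | cons n b ih =>
    by_cases ha : n :: b ∈ T
    · exact ih.inv ⟨ha, n, rfl⟩
    · exact ⟨_, fun c ⟨hc, m, hcm⟩ => absurd (hT (hcm ▸ hc)) ha⟩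

theorem IsTree.not_wellFounded_child_iff (hT : IsTree T) :
    ¬ WellFounded (Child T) ↔ ∃ w : ℕ → ℕ, ∀ k, revInit w k ∈ T := by
  constructor
  · intro h
    obtain ⟨f, hf0, hf⟩ :=
      not_acc_iff_exists_descending_chain.1 fun hacc => h ⟨hT.acc_child hacc⟩
    choose hmem w hw using hf
    have hrev : ∀ k, f k = revInit w k := by
      intro k
      induction k with
      | zero => exact hf0
      | succ k ih => rw [hw k, ih]; rfl
    exact ⟨w, fun k => hT (hrev (k + 1) ▸ hmem k)⟩
  · rintro ⟨w, hw⟩ hwf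
    exact (wellFounded_iff_isEmpty_descending_chain.1 hwf).false
      ⟨revInit w, fun k => ⟨hw (k + 1), w k, rfl⟩⟩

def EmbedsAt (S U : Set (List ℕ)) (q : List ℕ) : Prop :=
  ∃ h : List ℕ → List ℕ, h [] = q ∧ ∀ a b, Child S a b → Child U (h a) (h b)

def EmbedsStrictly (S U : Set (List ℕ)) : Prop := ∃ u, Child U u [] ∧ EmbedsAt S U u

theorem EmbedsAt.wellFounded {q : List ℕ} (h : EmbedsAt S U q) (hU : WellFounded (Child U)) :
    WellFounded (Child S) := by
  obtain ⟨h, -, hh⟩ := h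
  exact RelHomClass.wellFounded (⟨h, hh _ _⟩ : Child S →r Child U) hU

section TreeRank

variable [IsWellFounded _ (Child S)] [IsWellFounded _ (Child U)]

local notation "rk" => IsWellFounded.rank

theorem EmbedsAt.rank_le {q : List ℕ} (h : EmbedsAt S U q) : rk (Child S) [] ≤ rk (Child U) q := by
  obtain ⟨h, rfl, hh⟩ := h
  exact IsWellFounded.rank_le_rank_of_map hh []

theorem embedsAt_of_rank_le (hS : IsTree S) {q : List ℕ} (hq : rk (Child S) [] ≤ rk (Child U) q) :
    EmbedsAt S U q := by
  have hnext : ∀ n b u, ∃ u', rk (Child S) (n :: b) < rk (Child U) u →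
      Child U u' u ∧ rk (Child S) (n :: b) ≤ rk (Child U) u' := by
    intro n b u
    by_cases hlt : rk (Child S) (n :: b) < rk (Child U) u
    · obtain ⟨u', hu'⟩ := IsWellFounded.exists_rel_le_rank hlt
      exact ⟨u', fun _ => hu'⟩
    · exact ⟨u, fun h => absurd h hlt⟩
  choose next hnext using hnext
  -- `h` maps each path of `S` down `U`, keeping the rank of `h s` at least that of `s`.
  let h : List ℕ → List ℕ := fun s => s.rec q fun n b hb => next n b hb
  have hrank : ∀ s ∈ S, rk (Child S) s ≤ rk (Child U) (h s) := by
    intro s hs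
    induction s with
    | nil => exact hq
    | cons n b ih =>
      exact (hnext n b (h b) ((IsWellFounded.rank_lt_of_rel ⟨hs, n, rfl⟩).trans_le
        (ih (hS hs)))).2
  refine ⟨h, rfl, ?_⟩
  rintro a b ⟨ha, n, rfl⟩
  exact (hnext n b (h b) ((IsWellFounded.rank_lt_of_rel ⟨ha, n, rfl⟩).trans_le
    (hrank b (hS ha)))).1

theorem embedsAt_nil_iff_rank_le (hS : IsTree S) :
    EmbedsAt S U [] ↔ rk (Child S) [] ≤ rk (Child U) [] :=
  ⟨EmbedsAt.rank_le, embedsAt_of_rank_le hS⟩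

theorem embedsStrictly_iff_rank_lt (hS : IsTree S) :
    EmbedsStrictly S U ↔ rk (Child S) [] < rk (Child U) [] := by
  constructor
  · rintro ⟨u, hu, he⟩
    exact he.rank_le.trans_lt (IsWellFounded.rank_lt_of_rel hu)
  · intro hlt
    obtain ⟨u, hu, hle⟩ := IsWellFounded.exists_rel_le_rank hlt
    exact ⟨u, hu, embedsAt_of_rank_le hS hle⟩

end TreeRank

theorem not_embedsAt_nil_iff (hS : IsTree S) (hU : IsTree U) (hSwf : WellFounded (Child S)) :
    ¬ EmbedsAt U S [] ↔ ¬ WellFounded (Child U) ∨ EmbedsStrictly S U := by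
  by_cases hUwf : WellFounded (Child U)
  · have : IsWellFounded _ (Child S) := ⟨hSwf⟩
    have : IsWellFounded _ (Child U) := ⟨hUwf⟩
    rw [embedsAt_nil_iff_rank_le hU, embedsStrictly_iff_rank_lt hS, not_le]
    exact ⟨Or.inr, fun h => h.resolve_left (not_not.2 hUwf)⟩
  · exact iff_of_true (fun h => hUwf (h.wellFounded hSwf)) (Or.inl hUwf)

section TreeOf

variable {X : Type*} [TopologicalSpace X]

def treeOf (f : (ℕ → ℕ) → X) (x : X) : Set (List ℕ) := {s | x ∈ closure (f '' cyl s)}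

theorem isTree_treeOf (f : (ℕ → ℕ) → X) (x : X) : IsTree (treeOf f x) :=
  fun _ _ h => closure_mono (image_mono (cyl_cons_subset _ _)) h

theorem isClosed_setOf_mem_treeOf (f : (ℕ → ℕ) → X) (s : List ℕ) :
    IsClosed {x | s ∈ treeOf f x} :=
  isClosed_closure

variable [T2Space X] {f : (ℕ → ℕ) → X} {x y : X}

theorem mem_range_iff_not_wellFounded (hf : Continuous f) :
    x ∈ range f ↔ ¬ WellFounded (Child (treeOf f x)) := by
  rw [(isTree_treeOf f x).not_wellFounded_child_iff]
  constructor
  · rintro ⟨v, rfl⟩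
    exact ⟨v, fun k => subset_closure (mem_image_of_mem f (by simp [cyl]))⟩
  · rintro ⟨w, hw⟩
    exact ⟨w, eq_of_forall_mem_closure_image_cylinder hf fun k => cyl_revInit w k ▸ hw k⟩

theorem mem_range_of_embedsStrictly_treeOf (hf : Continuous f) (hy : y ∈ range f)
    (h : EmbedsStrictly (treeOf f y) (treeOf f x)) : x ∈ range f := by
  obtain ⟨u, -, he⟩ := h
  rw [mem_range_iff_not_wellFounded hf] at hy ⊢
  exact fun hx => hy (he.wellFounded hx)

theorem mem_range_or_embedsStrictly_treeOf_iff (hf : Continuous f) (hy : y ∉ range f) :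
    x ∈ range f ∨ EmbedsStrictly (treeOf f y) (treeOf f x) ↔
      ¬ EmbedsAt (treeOf f x) (treeOf f y) [] := by
  rw [mem_range_iff_not_wellFounded hf] at hy ⊢
  exact (not_embedsAt_nil_iff (isTree_treeOf f y) (isTree_treeOf f x) (not_not.1 hy)).symm

end TreeOf

end NatTree

section Analytic

variable {α : Type*} [TopologicalSpace α] {s t : Set α}

theorem MeasureTheory.AnalyticSet.union (hs : AnalyticSet s) (ht : AnalyticSet t) :
    AnalyticSet (s ∪ t) := by
  rw [union_eq_iUnion]
  exact AnalyticSet.iUnion (Bool.forall_bool.2 ⟨ht, hs⟩)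

theorem MeasureTheory.AnalyticSet.inter [T2Space α] (hs : AnalyticSet s) (ht : AnalyticSet t) :
    AnalyticSet (s ∩ t) := by
  rw [inter_eq_iInter]
  exact AnalyticSet.iInter (Bool.forall_bool.2 ⟨ht, hs⟩)

variable {Z : Type*} [TopologicalSpace Z] [PolishSpace Z] [MeasurableSpace Z] [BorelSpace Z]

theorem analyticSet_setOf_exists_fun {ι κ : Type*} [Denumerable ι] [Denumerable κ]
    {R : Z → ι → ι → κ → κ → Prop} (hR : ∀ a a' b b', MeasurableSet {z | R z a a' b b'}) :
    AnalyticSet {z | ∃ h : ι → κ, ∀ a a', R z a a' (h a) (h a')} := by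
  let decode : (ℕ → ℕ) → ι → κ := fun c a => Denumerable.ofNat κ (c (Encodable.encode a))
  have hW : MeasurableSet
      {p : Z × (ℕ → ℕ) | ∀ a a', R p.1 a a' (decode p.2 a) (decode p.2 a')} := by
    refine measurableSet_setOfPred.2 (Measurable.forall fun a => Measurable.forall fun a' => ?_)
    have hR' : Measurable fun q : Z × ℕ × ℕ =>
        R q.1 a a' (Denumerable.ofNat κ q.2.1) (Denumerable.ofNat κ q.2.2) :=
      measurable_from_prod_countable_left fun mn => measurableSet_setOfPred.1
        (hR a a' (Denumerable.ofNat κ mn.1) (Denumerable.ofNat κ mn.2))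
    exact hR'.comp (f := fun p : Z × (ℕ → ℕ) =>
      (p.1, p.2 (Encodable.encode a), p.2 (Encodable.encode a'))) (by fun_prop)
  convert hW.analyticSet.image_of_continuous continuous_fst
  ext z
  constructor
  · rintro ⟨h, hh⟩
    exact ⟨(z, fun n => Encodable.encode (h (Denumerable.ofNat ι n))), by simpa [decode] using hh,
      rfl⟩
  · rintro ⟨⟨z, c⟩, hc, rfl⟩
    exact ⟨decode c, hc⟩

open NatTree in
theorem analyticSet_setOf_embedsAt {τ₁ τ₂ : Z → Set (List ℕ)}
    (h₁ : ∀ s, MeasurableSet {z | s ∈ τ₁ z}) (h₂ : ∀ s, MeasurableSet {z | s ∈ τ₂ z})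
    (q : List ℕ) : AnalyticSet {z | EmbedsAt (τ₁ z) (τ₂ z) q} := by
  have hset : {z | EmbedsAt (τ₁ z) (τ₂ z) q} = {z | ∃ h : List ℕ → List ℕ, ∀ a b,
      (a = [] → h a = q) ∧ (Child (τ₁ z) a b → Child (τ₂ z) (h a) (h b))} := by
    ext z
    exact exists_congr fun h => ⟨fun ⟨h0, hh⟩ a b => ⟨fun ha => ha ▸ h0, hh a b⟩,
      fun hh => ⟨(hh [] []).1 rfl, fun a b => (hh a b).2⟩⟩
  rw [hset]
  refine analyticSet_setOf_exists_fun
    (R := fun z a b u v => (a = [] → u = q) ∧ (Child (τ₁ z) a b → Child (τ₂ z) u v))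
    fun a b u v => ?_
  have m₁ : Measurable fun z => a ∈ τ₁ z := measurableSet_setOfPred.1 (h₁ a)
  have m₂ : Measurable fun z => u ∈ τ₂ z := measurableSet_setOfPred.1 (h₂ u)
  simp only [Child]
  exact measurableSet_setOfPred.2 (by fun_prop)

open NatTree in
theorem analyticSet_setOf_embedsStrictly {τ₁ τ₂ : Z → Set (List ℕ)}
    (h₁ : ∀ s, MeasurableSet {z | s ∈ τ₁ z}) (h₂ : ∀ s, MeasurableSet {z | s ∈ τ₂ z}) :
    AnalyticSet {z | EmbedsStrictly (τ₁ z) (τ₂ z)} := by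
  simp only [EmbedsStrictly, ofPred_exists, ofPred_and]
  refine AnalyticSet.iUnion fun u =>
    AnalyticSet.inter ?_ (analyticSet_setOf_embedsAt h₁ h₂ u)
  have hu : Measurable fun z => u ∈ τ₂ z := measurableSet_setOfPred.1 (h₂ u)
  simp only [Child]
  exact (measurableSet_setOfPred.2 (by fun_prop)).analyticSet

end Analytic

open NatTree in
/-- The first reflection theorem (Kechris 35.10); `hΨ` says that `Ψ` is `Π¹₁` on `Σ¹₁`. -/
theorem MeasureTheory.AnalyticSet.exists_measurableSet_superset {X : Type*}
    [TopologicalSpace X] [PolishSpace X] [MeasurableSpace X] [BorelSpace X] {Ψ : Set X → Prop}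
    (hΨ : ∀ A : Set (X × X), AnalyticSet A → AnalyticSet {y | ¬ Ψ {x | (y, x) ∈ A}})
    {s : Set X} (hs : AnalyticSet s) (hΨs : Ψ s) : ∃ t, MeasurableSet t ∧ s ⊆ t ∧ Ψ t := by
  rw [AnalyticSet] at hs
  obtain rfl | ⟨f, hf, rfl⟩ := hs
  · exact ⟨∅, .empty, subset_rfl, hΨs⟩
  have hT : ∀ s, MeasurableSet {x | s ∈ treeOf f x} := fun s =>
    (isClosed_setOf_mem_treeOf f s).measurableSet
  let K : X → Set X := fun y => range f ∪ {x | EmbedsStrictly (treeOf f y) (treeOf f x)}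
  have hK : AnalyticSet {p : X × X | p.2 ∈ K p.1} :=
    ((analyticSet_range_of_polishSpace hf).preimage continuous_snd).union
      (analyticSet_setOf_embedsStrictly (fun s => measurable_fst (hT s))
        (fun s => measurable_snd (hT s)))
  by_cases h : ∃ y ∉ range f, Ψ (K y)
  · obtain ⟨y, hy, hΨy⟩ := h
    have hKc : (K y)ᶜ = {x | EmbedsAt (treeOf f x) (treeOf f y) []} :=
      ext fun x => (mem_range_or_embedsStrictly_treeOf_iff hf hy).not.trans not_not
    refine ⟨K y, ?_, subset_union_left, hΨy⟩
    refine (hK.preimage (continuous_const.prodMk continuous_id)).measurableSet_of_compl ?_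
    exact hKc ▸ analyticSet_setOf_embedsAt hT (fun _ => .const _) []
  · push Not at h
    have hbad : {y | ¬ Ψ (K y)} = (range f)ᶜ := by
      ext y
      by_cases hy : y ∈ range f
      · have hKy : K y = range f :=
          union_eq_left.2 fun _ => mem_range_of_embedsStrictly_treeOf hf hy
        simp [hy, hKy, hΨs]
      · simp [hy, h y hy]
    refine ⟨range f, ?_, subset_rfl, hΨs⟩
    exact (analyticSet_range_of_polishSpace hf).measurableSet_of_compl (hbad ▸ hΨ _ hK)

/-- The second reflection theorem (Kechris, 35.16).  If `Φ(A,B)` is hereditary,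
continuous upward in the second variable, and `Π¹₁ on Σ¹₁` (for every Polish `Y`
and analytic `A, B ⊆ Y × X`, the set `{y | Φ (A_y) (B_y)}` is coanalytic, i.e.
its complement is analytic), then for every analytic `D₀` with `Φ D₀ D₀ᶜ` there
is a Borel `D ⊇ D₀` with `Φ D Dᶜ`. -/
theorem second_reflection
    (X : Type) [TopologicalSpace X] [PolishSpace X]
    [MeasurableSpace X] [BorelSpace X]
    (Φ : Set X → Set X → Prop)
    (hered : ∀ A B A' B' : Set X, Φ A B → A' ⊆ A → B' ⊆ B → Φ A' B')
    (cont : ∀ (A : Set X) (B : ℕ → Set X), Monotone B →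
      (∀ n, Φ A (B n)) → Φ A (⋃ n, B n))
    (piOnSigma : ∀ (Y : Type) [TopologicalSpace Y] [PolishSpace Y],
      ∀ A B : Set (Y × X), AnalyticSet A → AnalyticSet B →
        AnalyticSet {y : Y | ¬ Φ {x | (y, x) ∈ A} {x | (y, x) ∈ B}})
    (D₀ : Set X) (hD₀ : AnalyticSet D₀) (hΦ₀ : Φ D₀ D₀ᶜ) :
    ∃ D : Set X, MeasurableSet D ∧ D₀ ⊆ D ∧ Φ D Dᶜ := by
  have shrink : ∀ E, MeasurableSet E ∧ D₀ ⊆ E →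
      ∃ E', (MeasurableSet E' ∧ D₀ ⊆ E') ∧ E' ⊆ E ∧ Φ E' Eᶜ := by
    rintro E ⟨hE, hD₀E⟩
    obtain ⟨B, hB, hD₀B, hΦB⟩ := hD₀.exists_measurableSet_superset (Ψ := (Φ · Eᶜ))
      (fun A hA => piOnSigma X A (Prod.snd ⁻¹' Eᶜ) hA
        (hE.compl.analyticSet.preimage continuous_snd))
      (hered _ _ _ _ hΦ₀ subset_rfl (compl_subset_compl.2 hD₀E))
    exact ⟨B ∩ E, ⟨hB.inter hE, subset_inter hD₀B hD₀E⟩, inter_subset_right,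
      hered _ _ _ _ hΦB inter_subset_left subset_rfl⟩
  choose! g hg hgE hgΦ using shrink
  let E : ℕ → Set X := fun n => g^[n] univ
  have hE : ∀ n, MeasurableSet (E n) ∧ D₀ ⊆ E n := by
    intro n
    induction n with
    | zero => exact ⟨.univ, subset_univ _⟩
    | succ n ih => simpa only [E, Function.iterate_succ_apply'] using hg _ ih
  have hE_succ : ∀ n, E (n + 1) = g (E n) := fun n => Function.iterate_succ_apply' g n univ
  refine ⟨⋂ n, E n, .iInter fun n => (hE n).1, subset_iInter fun n => (hE n).2, ?_⟩
  rw [compl_iInter]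
  refine cont _ _ (monotone_nat_of_le_succ fun n => ?_) fun n => ?_
  · exact compl_subset_compl.2 (hE_succ n ▸ hgE _ (hE n))
  · exact hered _ _ _ _ (hE_succ n ▸ hgΦ _ (hE n)) (iInter_subset E (n + 1)) subset_rfl
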